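/- Let K ⊆ L be an algebraic field extension, A a Prüfer v-multiplication domain with quotient field K, and B an integrally closed essential domain with quotient field L. Suppose B admits an essential representation 𝒱 such that for every V ∈ 𝒱 the center of V in A is a t-prime ideal of A. Then B is a Prüfer v-multiplication domain. -/

import Mathlib

open scoped nonZeroDivisors

/-- The localization of `R` at the prime `p`, viewed inside a field `K` to which `R` maps. -/
def locg {R K : Type*} [CommRing R] [Field K] [Algebra R K] (p : PrimeSpectrum R) :
    Subring K where
  carrier := {x : K | ∃ a b : R, b ∉ p.asIdeal ∧ x * algebraMap R K b = algebraMap R K a}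
  zero_mem' := ⟨0, 1, fun h => p.2.ne_top ((Ideal.eq_top_iff_one _).2 h), by simp⟩
  one_mem' := ⟨1, 1, fun h => p.2.ne_top ((Ideal.eq_top_iff_one _).2 h), by simp⟩
  add_mem' := by
    rintro x y ⟨a₁, b₁, hb₁, e₁⟩ ⟨a₂, b₂, hb₂, e₂⟩
    exact ⟨a₁ * b₂ + a₂ * b₁, b₁ * b₂,
      fun h => ((p.2.mem_or_mem h).elim hb₁ hb₂), by
        rw [map_add, map_mul, map_mul, map_mul]
        linear_combination (algebraMap R K b₂) * e₁ + (algebraMap R K b₁) * e₂⟩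
  mul_mem' := by
    rintro x y ⟨a₁, b₁, hb₁, e₁⟩ ⟨a₂, b₂, hb₂, e₂⟩
    exact ⟨a₁ * a₂, b₁ * b₂,
      fun h => ((p.2.mem_or_mem h).elim hb₁ hb₂), by
        rw [map_mul, map_mul, show x * y * (algebraMap R K b₁ * algebraMap R K b₂)
          = (x * algebraMap R K b₁) * (y * algebraMap R K b₂) by ring, e₁, e₂]⟩
  neg_mem' := by
    rintro x ⟨a, b, hb, e⟩
    exact ⟨-a, b, hb, by rw [map_neg, neg_mul, e]⟩
/-- `I` is a `t`-ideal: its `t`-closure is contained in (hence equal to) `I`. -/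
def IsTIdeal (R : Type*) [CommRing R] [IsDomain R] (I : Ideal R) : Prop :=
  ∀ x : R, (∃ J : Ideal R, J.FG ∧ J ≤ I ∧
    algebraMap R (FractionRing R) x ∈
      (1 / (1 / (J : FractionalIdeal R⁰ (FractionRing R))))) → x ∈ I

/-- `M` is a `t`-maximal ideal: maximal among proper `t`-ideals. -/
def IsTMax (R : Type*) [CommRing R] [IsDomain R] (M : Ideal R) : Prop :=
  IsTIdeal R M ∧ M ≠ ⊤ ∧ ∀ I : Ideal R, IsTIdeal R I → I ≠ ⊤ → M ≤ I → I = M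
/-- `R` is a Prüfer `v`-multiplication domain: the localization at every `t`-maximal
ideal is a valuation domain. -/
def IsPvMD (R : Type*) [CommRing R] [IsDomain R] : Prop :=
  ∀ M : Ideal R, IsTMax R M → ∀ hM : M.IsPrime,
    ValuationRing (locg (K := FractionRing R) ⟨M, hM⟩)
/-- The essential prime spectrum: the primes at which the localization is a valuation
domain. -/
def EssSpec (R : Type*) [CommRing R] [IsDomain R] : Set (PrimeSpectrum R) :=
  {p : PrimeSpectrum R | ValuationRing (locg (K := FractionRing R) p)}

/-- `{D_p : p ∈ Y}` is an essential representation of `R`: each localization is a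
valuation domain, and their intersection (inside the quotient field) is `R`. -/
def IsEssentialRep (R : Type*) [CommRing R] [IsDomain R] (Y : Set (PrimeSpectrum R)) : Prop :=
  (∀ p ∈ Y, ValuationRing (locg (K := FractionRing R) p)) ∧
    (⨅ p ∈ Y, locg (K := FractionRing R) p) = (algebraMap R (FractionRing R)).range

/-- `R` is an essential domain. -/
def IsEssential (R : Type*) [CommRing R] [IsDomain R] : Prop :=
  ∃ Y : Set (PrimeSpectrum R), IsEssentialRep R Y

/-!
Let `M` be a `t`-maximal ideal of `B`. In a valuation ring `A_m`, a finitely generated ideal `J`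
of `A` is generated by one of its elements, and principal ideals are divisorial, so
`J_v ⊆ J A_m`. When the center of `q` lies in `m` we have `A_m ⊆ B_q`; as `B = ⋂ B_q` over the
essential representation and every center lies in a `t`-maximal ideal of the PvMD `A`, this gives
`J_v ⊆ (JB)_v`. Hence the center `M ∩ A` is a `t`-ideal, so it lies in a `t`-maximal ideal `m`
with `A_m` a valuation ring, and `A_m ⊆ B_M`. Now `B_M` is an integrally closed local domain,
algebraic over `A_m`. Over a valuation ring every nonzero polynomial is a constant times one
with a unit coefficient, and by Kaplansky's lemma a root `x` of such a polynomial over an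
integrally closed local domain has `x` or `x⁻¹` in it; so `B_M` is a valuation ring.
-/

open Polynomial

namespace Ideal

variable {R : Type*} [CommRing R]

/-- `x ∈ J_v`, the dual `J⁻¹` being computed inside the field `F`. -/
def MemVClosure (F : Type*) [Field F] [Algebra R F] (J : Ideal R) (x : R) : Prop :=
  ∀ t : F, (∀ j ∈ J, t * algebraMap R F j ∈ (algebraMap R F).range) →
    t * algebraMap R F x ∈ (algebraMap R F).range

theorem memVClosure_iff_of_ringHom {F F' : Type*} [Field F] [Field F'] [Algebra R F]
    [Algebra R F'] (g : F →+* F') (hg : ∀ r : R, g (algebraMap R F r) = algebraMap R F' r)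
    (hinj : Function.Injective (algebraMap R F)) {J : Ideal R} (hJ : J ≠ ⊥) (x : R) :
    J.MemVClosure F x ↔ J.MemVClosure F' x := by
  have mem_range_iff (y : F) : g y ∈ (algebraMap R F').range ↔ y ∈ (algebraMap R F).range := by
    refine ⟨fun ⟨r, hr⟩ => ⟨r, g.injective (by rw [hg, hr])⟩, fun ⟨r, hr⟩ => ⟨r, by rw [← hr, hg]⟩⟩
  obtain ⟨j₀, hj₀J, hj₀⟩ := Submodule.exists_mem_ne_zero_of_ne_bot hJ
  have hj₀F : algebraMap R F j₀ ≠ 0 := (map_ne_zero_iff _ hinj).mpr hj₀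
  constructor
  · intro hx t' ht'
    -- `t'` lies in the image of `g`, since `t' * j₀ ∈ R`.
    obtain ⟨a, ha⟩ := ht' j₀ hj₀J
    have hgt : g (algebraMap R F a / algebraMap R F j₀) = t' := by
      rw [map_div₀, hg, hg, ha, mul_div_cancel_right₀ _ (by rwa [← hg, _root_.map_ne_zero])]
    rw [← hgt, ← hg, ← map_mul, mem_range_iff]
    exact hx _ fun j hj => by rw [← mem_range_iff, map_mul, hgt, hg]; exact ht' j hj
  · intro hx t ht
    rw [← mem_range_iff, map_mul, hg]
    exact hx (g t) fun j hj => by rw [← hg, ← map_mul, mem_range_iff]; exact ht j hj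

variable [IsDomain R]

theorem mem_one_div_one_div_iff_memVClosure {J : Ideal R} (hJ : J ≠ ⊥) (x : R) :
    algebraMap R (FractionRing R) x ∈ 1 / (1 / (J : FractionalIdeal R⁰ (FractionRing R))) ↔
      J.MemVClosure (FractionRing R) x := by
  have hJ0 : (J : FractionalIdeal R⁰ (FractionRing R)) ≠ 0 := by
    simpa [FractionalIdeal.coeIdeal_eq_zero] using hJ
  have mem_dual (t : FractionRing R) : t ∈ 1 / (J : FractionalIdeal R⁰ (FractionRing R)) ↔
      ∀ j ∈ J, t * algebraMap R _ j ∈ (algebraMap R (FractionRing R)).range := by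
    simp [FractionalIdeal.mem_div_iff_of_ne_zero hJ0, FractionalIdeal.mem_coeIdeal,
      FractionalIdeal.mem_one_iff]
  have hdual0 : 1 / (J : FractionalIdeal R⁰ (FractionRing R)) ≠ 0 := fun h0 => one_ne_zero <|
    (FractionalIdeal.mem_zero_iff _).mp <| h0 ▸ (mem_dual 1).mpr fun j _ => ⟨j, one_mul _ |>.symm⟩
  simp only [FractionalIdeal.mem_div_iff_of_ne_zero hdual0, mem_dual, MemVClosure,
    FractionalIdeal.mem_one_iff, ← RingHom.mem_range, mul_comm (algebraMap R _ x)]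

end Ideal

section TIdeal

variable {R : Type*} [CommRing R] [IsDomain R]

theorem isTIdeal_iff_memVClosure {F : Type*} [Field F] [Algebra R F]
    (hinj : Function.Injective (algebraMap R F)) {I : Ideal R} :
    IsTIdeal R I ↔ ∀ J : Ideal R, J.FG → J ≤ I → J ≠ ⊥ → ∀ x, J.MemVClosure F x → x ∈ I := by
  have transfer {J : Ideal R} (hJ : J ≠ ⊥) (x : R) :=
    (J.mem_one_div_one_div_iff_memVClosure hJ x).trans <|
      Ideal.memVClosure_iff_of_ringHom (IsFractionRing.lift hinj) (IsFractionRing.lift_algebraMap _)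
        (IsFractionRing.injective R _) hJ x
  refine ⟨fun hI J hfg hle hJ x hx => hI x ⟨J, hfg, hle, (transfer hJ x).mpr hx⟩, ?_⟩
  rintro hI x ⟨J, hfg, hle, hx⟩
  rcases eq_or_ne J ⊥ with rfl | hJ
  · rw [show x = 0 by simpa using hx]
    exact I.zero_mem
  · exact hI J hfg hle hJ x ((transfer hJ x).mp hx)

theorem IsTIdeal.colon_singleton {I : Ideal R} (hI : IsTIdeal R I) (a : R) :
    IsTIdeal R (I.colon {a}) := by
  rw [isTIdeal_iff_memVClosure (IsFractionRing.injective R (FractionRing R))] at hI ⊢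
  intro J hfg hle hJ x hx
  rw [Submodule.mem_colon_singleton, smul_eq_mul]
  rcases eq_or_ne a 0 with rfl | ha
  · simp
  refine hI (Ideal.span {a} * J) ((Submodule.fg_span_singleton a).mul hfg)
    (Ideal.span_singleton_mul_le_iff.mpr fun j hj => ?_) ?_ _ fun t ht => ?_
  · simpa [mul_comm] using Submodule.mem_colon_singleton.mp (hle hj)
  · simp [ha, hJ]
  · rw [map_mul, mul_comm (algebraMap R _ x), ← mul_assoc]
    refine hx _ fun j hj => ?_
    rw [mul_assoc, ← map_mul]
    exact ht _ (Ideal.mul_mem_mul (Ideal.mem_span_singleton_self a) hj)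

/-- If `xy ∈ M` and `x ∉ M`, the colon ideal `(M : x)` is a proper `t`-ideal containing `M`
and `y`. -/
theorem IsTMax.isPrime {M : Ideal R} (hM : IsTMax R M) : M.IsPrime := by
  obtain ⟨hMt, hMtop, hMmax⟩ := hM
  refine ⟨hMtop, fun {x y} hxy => or_iff_not_imp_left.mpr fun hx => ?_⟩
  have hcolon : M.colon {x} = M := by
    refine hMmax _ (hMt.colon_singleton x) (fun htop => hx ?_) fun z hz => ?_
    · simpa using Submodule.mem_colon_singleton.mp (htop ▸ Submodule.mem_top : (1 : R) ∈ _)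
    · exact Submodule.mem_colon_singleton.mpr (M.mul_mem_right x hz)
  rw [← hcolon, Submodule.mem_colon_singleton, smul_eq_mul, mul_comm]
  exact hxy

/-- Zorn: the `t`-closure only involves finitely generated ideals, which are compact, so the union
of a chain of `t`-ideals is a `t`-ideal. -/
theorem exists_le_isTMax {I : Ideal R} (hI : IsTIdeal R I) (htop : I ≠ ⊤) :
    ∃ M, I ≤ M ∧ IsTMax R M := by
  have le_mem_of_fg {c : Set (Ideal R)} (hc : IsChain (· ≤ ·) c) (hne : c.Nonempty) {J : Ideal R}
      (hfg : J.FG) (hJ : J ≤ sSup c) : ∃ J' ∈ c, J ≤ J' :=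
    (CompleteLattice.isCompactElement_iff_le_of_directed_sSup_le _ _).mp
      ((Submodule.fg_iff_compact J).mp hfg) c hne hc.directedOn hJ
  obtain ⟨M, hIM, ⟨hMt, hMtop⟩, hmax⟩ := zorn_le_nonempty₀ {J : Ideal R | IsTIdeal R J ∧ J ≠ ⊤}
    (fun c hcs hc J hJ => by
      refine ⟨sSup c, ⟨fun x ⟨J', hfg, hle, hx⟩ => ?_, fun htop => ?_⟩, fun _ => le_sSup⟩
      · obtain ⟨J'', hJ''c, hJ'J''⟩ := le_mem_of_fg hc ⟨J, hJ⟩ hfg hle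
        exact le_sSup hJ''c ((hcs hJ''c).1 x ⟨J', hfg, hJ'J'', hx⟩)
      · obtain ⟨J'', hJ''c, htopJ''⟩ := le_mem_of_fg hc ⟨J, hJ⟩ Module.Finite.fg_top htop.ge
        exact (hcs hJ''c).2 (top_le_iff.mp htopJ''))
    I ⟨hI, htop⟩
  exact ⟨M, hIM, hMt, hMtop, fun J hJt hJtop hMJ => (hmax ⟨hJt, hJtop⟩ hMJ).antisymm hMJ⟩

end TIdeal

section Locg

variable {R F : Type*} [CommRing R] [Field F] [Algebra R F]

theorem algebraMap_mem_locg (p : PrimeSpectrum R) (r : R) : algebraMap R F r ∈ locg (K := F) p :=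
  ⟨r, 1, p.2.ne_top ∘ (Ideal.eq_top_iff_one _).2, by simp⟩

theorem map_mem_locg_iff {F' : Type*} [Field F'] [Algebra R F'] (g : F →+* F')
    (hg : ∀ r : R, g (algebraMap R F r) = algebraMap R F' r) {p : PrimeSpectrum R} {x : F} :
    g x ∈ locg (K := F') p ↔ x ∈ locg (K := F) p := by
  refine ⟨fun ⟨a, b, hb, h⟩ => ⟨a, b, hb, g.injective ?_⟩, fun ⟨a, b, hb, h⟩ => ⟨a, b, hb, ?_⟩⟩
  · rwa [map_mul, hg, hg]
  · rw [← hg, ← hg, ← map_mul, h]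

theorem locg_le_locg {S : Type*} [CommRing S] [Algebra R S] [Algebra S F] [IsScalarTower R S F]
    {p : PrimeSpectrum R} {q : PrimeSpectrum S} (h : q.asIdeal.comap (algebraMap R S) ≤ p.asIdeal) :
    locg (K := F) p ≤ locg (K := F) q := by
  rintro x ⟨a, b, hb, hx⟩
  exact ⟨algebraMap R S a, algebraMap R S b, fun hbq => hb (h hbq), by
    rwa [← IsScalarTower.algebraMap_apply, ← IsScalarTower.algebraMap_apply]⟩

noncomputable instance (p : PrimeSpectrum R) : Algebra R (locg (K := F) p) :=
  ((algebraMap R F).codRestrict _ (algebraMap_mem_locg p)).toAlgebra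

instance (p : PrimeSpectrum R) : IsScalarTower R (locg (K := F) p) F :=
  .of_algebraMap_eq fun _ => rfl

theorem isLocalization_locg (hinj : Function.Injective (algebraMap R F)) (p : PrimeSpectrum R) :
    IsLocalization.AtPrime (locg (K := F) p) p.asIdeal where
  map_units := by
    rintro ⟨b, hb⟩
    have hbF : algebraMap R F b ≠ 0 :=
      (map_ne_zero_iff _ hinj).mpr fun h => hb (h ▸ p.asIdeal.zero_mem)
    refine isUnit_iff_exists_inv.mpr ⟨⟨(algebraMap R F b)⁻¹, 1, b, hb, ?_⟩, Subtype.ext ?_⟩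
    · simp [hbF]
    · exact mul_inv_cancel₀ hbF
  surj := by
    rintro ⟨x, a, b, hb, hx⟩
    exact ⟨(a, ⟨b, hb⟩), Subtype.ext hx⟩
  exists_of_eq {x y} h := ⟨1, by rw [hinj (congrArg Subtype.val h)]⟩

theorem valuationRing_locg {F' : Type*} [Field F'] [Algebra R F']
    (hinj : Function.Injective (algebraMap R F)) (hinj' : Function.Injective (algebraMap R F'))
    (p : PrimeSpectrum R) [ValuationRing (locg (K := F) p)] : ValuationRing (locg (K := F') p) :=
  have := isLocalization_locg hinj p
  have := isLocalization_locg hinj' p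
  let e := IsLocalization.algEquiv p.asIdeal.primeCompl (locg (K := F) p) (locg (K := F') p)
  Function.Surjective.valuationRing (e : locg (K := F) p →+* locg (K := F') p) e.surjective

theorem isIntegrallyClosedIn_locg [IsDomain R] [IsIntegrallyClosed R] [IsFractionRing R F]
    (p : PrimeSpectrum R) : IsIntegrallyClosedIn (locg (K := F) p) F :=
  have := isLocalization_locg (IsFractionRing.injective R F) p
  have := isIntegrallyClosed_of_isLocalization (locg (K := F) p) p.asIdeal.primeCompl
    (Ideal.primeCompl_le_nonZeroDivisors _)
  have := IsFractionRing.isFractionRing_of_isDomain_of_isLocalization p.asIdeal.primeCompl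
    (locg (K := F) p) F
  (isIntegrallyClosed_iff_isIntegrallyClosedIn F).mp ‹_›

end Locg

section ValuationCriterion

theorem ValuationRing.exists_dvd_forall {W ι : Type*} [CommRing W] [IsDomain W] [ValuationRing W]
    (f : ι → W) {s : Finset ι} (hs : s.Nonempty) : ∃ k ∈ s, ∀ i ∈ s, f k ∣ f i := by
  obtain ⟨k, hk, hmin⟩ := s.exists_minimalFor (fun i => Associates.mk (f i)) hs
  refine ⟨k, hk, fun i hi => (ValuationRing.dvd_total (f k) (f i)).elim id fun h => ?_⟩
  exact Associates.mk_le_mk_iff_dvd.mp (hmin hi (Associates.mk_le_mk_iff_dvd.mpr h))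

theorem ValuationRing.exists_eq_C_mul_of_coeff_eq_one {W : Type*} [CommRing W] [IsDomain W]
    [ValuationRing W] {p : W[X]} (hp : p ≠ 0) :
    ∃ c ≠ 0, ∃ q : W[X], ∃ k, p = C c * q ∧ q.coeff k = 1 := by
  obtain ⟨k, hk, hmin⟩ := ValuationRing.exists_dvd_forall p.coeff (nonempty_support_iff.mpr hp)
  have hdvd (i : ℕ) : p.coeff k ∣ p.coeff i := by
    by_cases hi : i ∈ p.support
    · exact hmin i hi
    · simp [notMem_support_iff.mp hi]
  obtain ⟨q, hq⟩ := (C_dvd_iff_dvd_coeff _ _).mpr hdvd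
  have hck : p.coeff k ≠ 0 := mem_support_iff.mp hk
  refine ⟨p.coeff k, hck, q, k, hq, mul_left_cancel₀ hck ?_⟩
  rw [mul_one, ← coeff_C_mul, ← hq]

variable {R K : Type*} [CommRing R] [IsLocalRing R] [Field K] [Algebra R K]
  [IsIntegrallyClosedIn R K]

/-- Kaplansky, *Commutative Rings*, Theorem 67. -/
theorem isInteger_or_isInteger_inv_of_aeval_eq_zero {p : R[X]} {i : ℕ} (hi : IsUnit (p.coeff i))
    {x : K} (hx : aeval x p = 0) :
    IsLocalization.IsInteger R x ∨ IsLocalization.IsInteger R x⁻¹ := by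
  induction hn : p.natDegree using Nat.strong_induction_on generalizing p i with
  | _ n ih =>
  have hlcx := isIntegral_leadingCoeff_smul p x hx
  by_cases hlc : IsUnit p.leadingCoeff
  · obtain ⟨u, hu⟩ := hlc
    have : IsIntegral R x := by simpa [← hu, smul_smul] using hlcx.smul (↑u⁻¹ : R)
    exact Or.inl (IsIntegrallyClosedIn.isIntegral_iff.mp this)
  obtain ⟨r, hr⟩ := IsIntegrallyClosedIn.isIntegral_iff.mp hlcx
  by_cases hru : IsUnit r
  · obtain ⟨u, rfl⟩ := hru
    refine Or.inr ⟨p.leadingCoeff * ↑u⁻¹, eq_inv_of_mul_eq_one_left ?_⟩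
    rw [map_mul, mul_right_comm, ← Algebra.smul_def, ← hr, ← map_mul, Units.mul_inv, map_one]
  -- Replace `lc X^n + a X^(n-1)` by `(a + r) X^(n-1)`: the degree drops and a unit coefficient
  -- survives, because `r = lc • x` is not a unit.
  have hin : i < n := by
    refine lt_of_le_of_ne ?_ fun h => hlc (by rwa [leadingCoeff, hn, ← h])
    exact hn ▸ le_natDegree_of_ne_zero hi.ne_zero
  set q := p.eraseLead + C r * X ^ (n - 1)
  have hq : aeval x q = 0 := by
    have hp := congrArg (aeval x) p.eraseLead_add_C_mul_X_pow
    simp only [hx, hn, map_add, map_mul, aeval_C, map_pow, aeval_X] at hp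
    simp only [q, map_add, map_mul, aeval_C, map_pow, aeval_X, hr, Algebra.smul_def]
    rw [mul_assoc, ← pow_succ', Nat.sub_add_cancel (by omega), hp]
  have hqi : IsUnit (q.coeff i) := by
    rw [coeff_add, eraseLead_coeff_of_ne i (by omega), coeff_C_mul_X_pow]
    split_ifs
    · by_contra hu
      exact IsLocalRing.nonunits_add hu (show -r ∈ nonunits R by simpa) (by simpa using hi)
    · simpa using hi
  have hqdeg : q.natDegree < n := by
    refine (natDegree_add_le _ _).trans_lt (max_lt ?_ ?_)
    · exact (eraseLead_natDegree_le p).trans_lt (by omega)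
    · exact (natDegree_C_mul_X_pow_le r _).trans_lt (by omega)
  exact ih _ hqdeg hqi hq rfl

theorem IsIntegrallyClosedIn.valuationRing_of_isAlgebraic [IsDomain R] {W : Type*} [CommRing W]
    [IsDomain W] [ValuationRing W] [Algebra W R] [Algebra W K] [IsScalarTower W R K]
    [Algebra.IsAlgebraic W K] (hW : Function.Injective (algebraMap W K)) : ValuationRing R := by
  have key (x : K) : IsLocalization.IsInteger R x ∨ IsLocalization.IsInteger R x⁻¹ := by
    obtain ⟨p, hp0, hpx⟩ := Algebra.IsAlgebraic.isAlgebraic (R := W) x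
    obtain ⟨c, hc, q, k, rfl, hqk⟩ := ValuationRing.exists_eq_C_mul_of_coeff_eq_one hp0
    rw [map_mul, aeval_C, mul_eq_zero, or_iff_right ((map_ne_zero_iff _ hW).mpr hc),
      ← aeval_map_algebraMap R] at hpx
    exact isInteger_or_isInteger_inv_of_aeval_eq_zero (i := k) (by simp [hqk]) hpx
  have : IsFractionRing R K :=
    isFractionRing_of_exists_eq_algebraMap_or_inv_eq_algebraMap_of_injective
      (fun x => (key x).elim (fun ⟨a, ha⟩ => ⟨a, .inl ha.symm⟩) fun ⟨a, ha⟩ => ⟨a, .inr ha.symm⟩)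
      (IsIntegralClosure.algebraMap_injective R R K)
  exact (ValuationRing.iff_isInteger_or_isInteger R K).mpr key

end ValuationCriterion

section Contraction

variable {A F : Type*} [CommRing A] [Field F] [Algebra A F]

/-- `J A_m = a A_m`. -/
theorem exists_mem_forall_mul_mem_span_singleton (hinj : Function.Injective (algebraMap A F))
    (m : PrimeSpectrum A) [ValuationRing (locg (K := F) m)] {J : Ideal A} (hfg : J.FG) :
    ∃ a ∈ J, ∃ d ∉ m.asIdeal, ∀ j ∈ J, d * j ∈ Ideal.span {a} := by
  classical
  obtain ⟨s, rfl⟩ := hfg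
  rcases s.eq_empty_or_nonempty with rfl | hs
  · exact ⟨0, zero_mem _, 1, m.2.ne_top ∘ (Ideal.eq_top_iff_one _).2, by simp⟩
  obtain ⟨a, ha, hdvd⟩ := ValuationRing.exists_dvd_forall (algebraMap A (locg (K := F) m)) hs
  have hloc : ∀ b ∈ s, ∃ c d, d ∉ m.asIdeal ∧ d * b = a * c := by
    intro b hb
    obtain ⟨w, hw⟩ := hdvd b hb
    obtain ⟨c, d, hd, hwd⟩ := w.2
    refine ⟨c, d, hd, hinj ?_⟩
    have hw : algebraMap A F b = algebraMap A F a * w := congrArg Subtype.val hw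
    rw [map_mul, map_mul, hw, ← hwd]
    ring
  choose! c d hd hdb using hloc
  refine ⟨a, Ideal.subset_span ha, ∏ b ∈ s, d b, fun h => ?_, fun j hj => ?_⟩
  · obtain ⟨b, hb, hbm⟩ := Ideal.IsPrime.prod_mem_iff.mp h
    exact hd b hb hbm
  have hspan : Ideal.span ↑s ≤ (Ideal.span {a}).colon {∏ b ∈ s, d b} := by
    refine Ideal.span_le.mpr fun b hb => Submodule.mem_colon_singleton.mpr ?_
    rw [smul_eq_mul, ← Finset.mul_prod_erase s d hb, ← mul_assoc, mul_comm b, hdb b hb, mul_assoc]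
    exact Ideal.mul_mem_right _ _ (Ideal.mem_span_singleton_self a)
  simpa [mul_comm] using Submodule.mem_colon_singleton.mp (hspan hj)

/-- Principal ideals are divisorial. -/
theorem Ideal.MemVClosure.mul_mem_span_singleton [IsDomain A]
    (hinj : Function.Injective (algebraMap A F)) {J : Ideal A} (hJ : J ≠ ⊥) {a d : A} (hd : d ≠ 0)
    (hdJ : ∀ j ∈ J, d * j ∈ Ideal.span {a}) {x : A} (hx : J.MemVClosure F x) :
    d * x ∈ Ideal.span {a} := by
  obtain ⟨j₀, hj₀J, hj₀⟩ := Submodule.exists_mem_ne_zero_of_ne_bot hJ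
  have ha : algebraMap A F a ≠ 0 := by
    refine (map_ne_zero_iff _ hinj).mpr fun ha => mul_ne_zero hd hj₀ ?_
    simpa [ha] using hdJ j₀ hj₀J
  obtain ⟨e, he⟩ := hx (algebraMap A F d / algebraMap A F a) fun j hj => by
    obtain ⟨e, he⟩ := Ideal.mem_span_singleton'.mp (hdJ j hj)
    exact ⟨e, by rw [div_mul_eq_mul_div, eq_div_iff ha, ← map_mul, ← map_mul, he]⟩
  rw [div_mul_eq_mul_div, eq_div_iff ha, ← map_mul, ← map_mul] at he
  exact Ideal.mem_span_singleton'.mpr ⟨e, hinj he⟩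

end Contraction

theorem IsTIdeal.comap {A B L : Type*} [CommRing A] [IsDomain A] [CommRing B] [IsDomain B]
    [Field L] [Algebra A B] [Algebra B L] [Algebra A L] [IsScalarTower A B L]
    (hAL : Function.Injective (algebraMap A L)) (hBL : Function.Injective (algebraMap B L))
    {Y : Set (PrimeSpectrum B)}
    (hY : ∀ x : L, (∀ q ∈ Y, x ∈ locg (K := L) q) → x ∈ (algebraMap B L).range)
    (hval : ∀ q ∈ Y, ∃ m : PrimeSpectrum A,
      q.asIdeal.comap (algebraMap A B) ≤ m.asIdeal ∧ ValuationRing (locg (K := L) m))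
    {M : Ideal B} (hM : IsTIdeal B M) : IsTIdeal A (M.comap (algebraMap A B)) := by
  have hAB : Function.Injective (algebraMap A B) := fun a a' h =>
    hAL (by simp only [IsScalarTower.algebraMap_apply A B L, h])
  rw [isTIdeal_iff_memVClosure hBL] at hM
  rw [isTIdeal_iff_memVClosure hAL]
  intro J hfg hle hJ x hx
  refine hM _ (hfg.map _) (Ideal.map_le_iff_le_comap.mpr hle)
    ((Ideal.map_eq_bot_iff_of_injective hAB).not.mpr hJ) _ fun t ht => ?_
  rw [← IsScalarTower.algebraMap_apply]
  refine hY _ fun q hq => ?_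
  obtain ⟨m, hqm, hm⟩ := hval q hq
  obtain ⟨a, haJ, d, hdm, hdJ⟩ := exists_mem_forall_mul_mem_span_singleton hAL m hfg
  obtain ⟨e, he⟩ := Ideal.mem_span_singleton'.mp <|
    hx.mul_mem_span_singleton hAL hJ (by rintro rfl; exact hdm m.asIdeal.zero_mem) hdJ
  obtain ⟨b, hb⟩ := ht _ (Ideal.mem_map_of_mem _ haJ)
  refine ⟨b * algebraMap A B e, algebraMap A B d, fun h => hdm (hqm h), ?_⟩
  simp only [map_mul, ← IsScalarTower.algebraMap_apply] at hb ⊢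
  rw [hb, mul_assoc, ← map_mul, mul_comm x, ← he, map_mul]
  ring

theorem IsEssentialRep.mem_range_of_forall_mem_locg {B L : Type*} [CommRing B] [IsDomain B]
    [Field L] [Algebra B L] [IsFractionRing B L] {Y : Set (PrimeSpectrum B)}
    (hY : IsEssentialRep B Y) {x : L} (hx : ∀ q ∈ Y, x ∈ locg (K := L) q) :
    x ∈ (algebraMap B L).range := by
  let e := FractionRing.algEquiv B L
  have he (b : B) : e.symm (algebraMap B L b) = algebraMap B (FractionRing B) b :=
    e.symm.commutes b
  have hmem : e.symm x ∈ ⨅ q ∈ Y, locg (K := FractionRing B) q := by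
    simp only [Subring.mem_iInf]
    exact fun q hq => (map_mem_locg_iff (e.symm : L →+* FractionRing B) he).mpr (hx q hq)
  obtain ⟨b, hb⟩ := hY.2 ▸ hmem
  exact ⟨b, e.symm.injective (by rw [he, hb])⟩

theorem IsPvMD.exists_le_valuationRing_locg {A F : Type*} [CommRing A] [IsDomain A] [Field F]
    [Algebra A F] (hA : IsPvMD A) (hinj : Function.Injective (algebraMap A F)) {P : Ideal A}
    (hP : IsTIdeal A P) (htop : P ≠ ⊤) :
    ∃ m : PrimeSpectrum A, P ≤ m.asIdeal ∧ ValuationRing (locg (K := F) m) := by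
  obtain ⟨M, hPM, hM⟩ := exists_le_isTMax hP htop
  have := hA M hM hM.isPrime
  exact ⟨⟨M, hM.isPrime⟩, hPM,
    valuationRing_locg (IsFractionRing.injective A (FractionRing A)) hinj _⟩

theorem valuationRing_locg_of_comap_le {A B L : Type*} [CommRing A] [CommRing B] [IsDomain B]
    [IsIntegrallyClosed B] [Field L] [Algebra A B] [Algebra B L] [IsFractionRing B L]
    [Algebra A L] [IsScalarTower A B L] [Algebra.IsAlgebraic A L]
    (hAL : Function.Injective (algebraMap A L)) {m : PrimeSpectrum A}
    [ValuationRing (locg (K := L) m)] {M : PrimeSpectrum B}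
    (h : M.asIdeal.comap (algebraMap A B) ≤ m.asIdeal) : ValuationRing (locg (K := L) M) :=
  let : Algebra (locg (K := L) m) (locg (K := L) M) :=
    (Subring.inclusion (locg_le_locg h)).toAlgebra
  have : IsScalarTower (locg (K := L) m) (locg (K := L) M) L := .of_algebraMap_eq fun _ => rfl
  have := isLocalization_locg (IsFractionRing.injective B L) M
  have := IsLocalization.AtPrime.isLocalRing (locg (K := L) M) M.asIdeal
  have := isIntegrallyClosedIn_locg (F := L) M
  have : Algebra.IsAlgebraic (locg (K := L) m) L :=
    .extendScalars (R := A) fun _ _ h => hAL (congrArg Subtype.val h)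
  IsIntegrallyClosedIn.valuationRing_of_isAlgebraic (W := locg (K := L) m)
    Subtype.val_injective

theorem isPvMD_of_algebraic_extension {A B K L : Type*} [CommRing A] [IsDomain A]
    [CommRing B] [IsDomain B] [Field K] [Field L]
    [Algebra A K] [IsFractionRing A K] [Algebra B L] [IsFractionRing B L]
    [Algebra K L] [Algebra.IsAlgebraic K L] [Algebra A B] [Algebra A L]
    [IsScalarTower A K L] [IsScalarTower A B L]
    (hA : IsPvMD A) (hB : IsIntegrallyClosed B)
    (Y : Set (PrimeSpectrum B)) (hrep : IsEssentialRep B Y)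
    (hcent : ∀ q ∈ Y, (Ideal.comap (algebraMap A B) (PrimeSpectrum.asIdeal q)).IsPrime ∧
      IsTIdeal A (Ideal.comap (algebraMap A B) (PrimeSpectrum.asIdeal q))) :
    IsPvMD B := by
  intro M hMt hMp
  have hAL : Function.Injective (algebraMap A L) := by
    rw [IsScalarTower.algebraMap_eq A K L]
    exact (algebraMap K L).injective.comp (IsFractionRing.injective A K)
  have hBL := IsFractionRing.injective B L
  have hcenter : IsTIdeal A (M.comap (algebraMap A B)) :=
    hMt.1.comap hAL hBL (fun _ => hrep.mem_range_of_forall_mem_locg)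
      fun q hq => hA.exists_le_valuationRing_locg hAL (hcent q hq).2 (hcent q hq).1.ne_top
  obtain ⟨m, hMm, hm⟩ :=
    hA.exists_le_valuationRing_locg hAL hcenter (Ideal.IsPrime.comap _).ne_top
  have : Algebra.IsAlgebraic A L :=
    ⟨fun x => (IsFractionRing.isAlgebraic_iff A K L).mpr (Algebra.IsAlgebraic.isAlgebraic x)⟩
  have := valuationRing_locg_of_comap_le hAL (M := ⟨M, hMp⟩) hMm
  exact valuationRing_locg hBL (IsFractionRing.injective B (FractionRing B)) _
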